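/- Let p be a positive rational with √p irrational, and let x₁ = a₁ + b₁√p, …, xₙ = aₙ + bₙ√p with all aᵢ, bᵢ ∈ ℚ and all xᵢ > 0. Suppose there exist indices i, j with (aᵢ − bᵢ√p)(aⱼ − bⱼ√p) < 0. Then a rectangle of aspect ratio z > 0 can be tiled by rectangles with aspect ratios x₁, …, xₙ if and only if z = e + f√p for some rationals e, f. -/

import Mathlib

/-- A tiling of the rectangle `[0,1] × [0,r]` by finitely many closed
axis-parallel rectangles with positive side lengths, covering the rectangle
and having pairwise disjoint interiors. -/
structure RectTiling (r : ℝ) where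
  m : ℕ
  px : Fin m → ℝ
  py : Fin m → ℝ
  w : Fin m → ℝ
  h : Fin m → ℝ
  w_pos : ∀ k, 0 < w k
  h_pos : ∀ k, 0 < h k
  cover : (Set.Icc (0:ℝ) 1 ×ˢ Set.Icc (0:ℝ) r) =
      ⋃ k, Set.Icc (px k) (px k + w k) ×ˢ Set.Icc (py k) (py k + h k)
  disj : ∀ k l, k ≠ l →
      Disjoint ((Set.Ioo (px k) (px k + w k)) ×ˢ (Set.Ioo (py k) (py k + h k)))
               ((Set.Ioo (px l) (px l + w l)) ×ˢ (Set.Ioo (py l) (py l + h l)))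

/-- Tile `k` of the tiling `T` has aspect ratio `x` (in one of the two orientations). -/
def RectTiling.ratioOK {r : ℝ} (T : RectTiling r) (k : Fin T.m) (x : ℝ) : Prop :=
  T.h k / T.w k = x ∨ T.w k / T.h k = x

/-- The rectangle of aspect ratio `r` is tileable by rectangles with aspect
ratios among `X`. -/
def Tileable (r : ℝ) {n : ℕ} (X : Fin n → ℝ) : Prop :=
  ∃ T : RectTiling r, ∀ k, ∃ i, T.ratioOK k (X i)

/-- The rectangle of aspect ratio `r` admits a *diverse* tiling by rectangles
with aspect ratios `X 0, …, X (n-1)`: every tile has some ratio `X i`, and for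
every `i` some tile has ratio `X i`. -/
def DiverselyTileable (r : ℝ) {n : ℕ} (X : Fin n → ℝ) : Prop :=
  ∃ T : RectTiling r, (∀ k, ∃ i, T.ratioOK k (X i)) ∧ (∀ i, ∃ k, T.ratioOK k (X i))

/-!
If `z ∉ K = ℚ(√p)`, pick a `K`-linear `φ : ℝ → K` with `φ 1 = 1` and `φ z = -1`. Cutting the
rectangle along all tile coordinates shows, for any additive `φ`, that `∑ φ(w) φ(h)` over the tiles
equals `φ(1) φ(z) = -1` (Dehn). But every tile has `h = x w` (or `w = x h`) with `0 < x ∈ K`, so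
each term is `x φ(w)² ≥ 0`.

Conversely, tileable ratios are closed under sums (stacking), inverses (transposing) and hence
positive rational multiples. For `x = a + b√p` with conjugate `x'`, the norm `x x'` is rational,
so `x'` is a rational multiple of `x⁻¹`: a generator with `x' < 0` yields `x - x' = 2b√p`, one with
`x' > 0` yields `x + x' = 2a`. From `1` and `√p` one gets every positive `e + f√p`: either
`e, f ≥ 0`, or the inverse has nonnegative coordinates.
-/

open Set

lemma Fin.iUnion_add {α : Type*} {m n : ℕ} (F : Fin (m + n) → Set α) :
    ⋃ k, F k = (⋃ i, F (Fin.castAdd n i)) ∪ ⋃ j, F (Fin.natAdd m j) := by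
  rw [← finSumFinEquiv.surjective.iUnion_comp, iUnion_sum]
  rfl

namespace RectTiling

variable {r s : ℝ}

lemma box_subset (T : RectTiling r) (k : Fin T.m) :
    Icc (T.px k) (T.px k + T.w k) ×ˢ Icc (T.py k) (T.py k + T.h k) ⊆ Icc 0 1 ×ˢ Icc 0 r :=
  T.cover ▸ subset_iUnion (fun k ↦ Icc (T.px k) (T.px k + T.w k) ×ˢ Icc (T.py k) (T.py k + T.h k)) k

lemma bounds (T : RectTiling r) (k : Fin T.m) :
    0 ≤ T.px k ∧ T.px k + T.w k ≤ 1 ∧ 0 ≤ T.py k ∧ T.py k + T.h k ≤ r := by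
  have hw := (T.w_pos k).le
  have hh := (T.h_pos k).le
  have h₀ := T.box_subset k (mk_mem_prod (left_mem_Icc.2 (by linarith))
    (left_mem_Icc.2 (by linarith)))
  have h₁ := T.box_subset k (mk_mem_prod (right_mem_Icc.2 (by linarith))
    (right_mem_Icc.2 (by linarith)))
  exact ⟨h₀.1.1, h₁.1.2, h₀.2.1, h₁.2.2⟩

def stack (hr : 0 ≤ r) (hs : 0 ≤ s) (T₁ : RectTiling r) (T₂ : RectTiling s) :
    RectTiling (r + s) where
  m := T₁.m + T₂.m
  px := Fin.append T₁.px T₂.px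
  py := Fin.append T₁.py (T₂.py · + r)
  w := Fin.append T₁.w T₂.w
  h := Fin.append T₁.h T₂.h
  w_pos := Fin.addCases (by simpa using T₁.w_pos) (by simpa using T₂.w_pos)
  h_pos := Fin.addCases (by simpa using T₁.h_pos) (by simpa using T₂.h_pos)
  cover := by
    have hshift : ∀ a b c d : ℝ, Prod.map id (· - r) ⁻¹' (Icc a b ×ˢ Icc c d) =
        Icc a b ×ˢ Icc (c + r) (d + r) := fun a b c d ↦ by
      rw [preimage_prod_map_prod, preimage_id, preimage_sub_const_Icc]
    have h₂ := congrArg (Prod.map id (· - r) ⁻¹' ·) T₂.cover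
    simp only [preimage_iUnion, hshift, zero_add] at h₂
    rw [Fin.iUnion_add, ← Icc_union_Icc_eq_Icc hr (le_add_of_nonneg_right hs), prod_union,
      T₁.cover, add_comm r s, h₂]
    simp [add_right_comm]
  disj := by
    have hshift : ∀ a b c d : ℝ, Prod.map id (· - r) ⁻¹' (Ioo a b ×ˢ Ioo c d) =
        Ioo a b ×ˢ Ioo (c + r) (d + r) := fun a b c d ↦ by
      rw [preimage_prod_map_prod, preimage_id, preimage_sub_const_Ioo]
    refine Fin.addCases (fun i ↦ Fin.addCases (fun i' hne ↦ ?_) (fun j' _ ↦ ?_))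
      (fun j ↦ Fin.addCases (fun i' _ ↦ ?_) (fun j' hne ↦ ?_))
    · simpa using T₁.disj i i' (by rintro rfl; exact hne rfl)
    · simp only [Fin.append_left, Fin.append_right]
      refine disjoint_left.2 fun q hq₁ hq₂ ↦ ?_
      linarith [hq₁.2.2, hq₂.2.1, (T₁.bounds i).2.2.2, (T₂.bounds j').2.2.1]
    · simp only [Fin.append_left, Fin.append_right]
      refine disjoint_left.2 fun q hq₁ hq₂ ↦ ?_
      linarith [hq₂.2.2, hq₁.2.1, (T₁.bounds i').2.2.2, (T₂.bounds j).2.2.1]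
    · have := (T₂.disj j j' (by rintro rfl; exact hne rfl)).preimage (Prod.map id (· - r))
      simpa [hshift, add_right_comm] using this

noncomputable def transpose (hr : 0 < r) (T : RectTiling r) : RectTiling r⁻¹ where
  m := T.m
  px k := T.py k / r
  py k := T.px k / r
  w k := T.h k / r
  h k := T.w k / r
  w_pos k := div_pos (T.h_pos k) hr
  h_pos k := div_pos (T.w_pos k) hr
  cover := by
    have hIcc : ∀ a b c d : ℝ, (fun q : ℝ × ℝ ↦ (r * q.2, r * q.1)) ⁻¹' (Icc a b ×ˢ Icc c d) =
        Icc (c / r) (d / r) ×ˢ Icc (a / r) (b / r) := fun a b c d ↦ by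
      ext; simp only [mem_preimage, mem_prod, mem_Icc, div_le_iff₀' hr, le_div_iff₀' hr]; tauto
    have h := congrArg ((fun q : ℝ × ℝ ↦ (r * q.2, r * q.1)) ⁻¹' ·) T.cover
    simp only [preimage_iUnion, hIcc, zero_div, div_self hr.ne', add_div] at h
    simpa only [one_div] using h
  disj k l hkl := by
    have hIoo : ∀ a b c d : ℝ, (fun q : ℝ × ℝ ↦ (r * q.2, r * q.1)) ⁻¹' (Ioo a b ×ˢ Ioo c d) =
        Ioo (c / r) (d / r) ×ˢ Ioo (a / r) (b / r) := fun a b c d ↦ by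
      ext; simp only [mem_preimage, mem_prod, mem_Ioo, div_lt_iff₀' hr, lt_div_iff₀' hr]; tauto
    simpa only [hIoo, add_div] using (T.disj k l hkl).preimage (fun q : ℝ × ℝ ↦ (r * q.2, r * q.1))

end RectTiling

section Tileable

variable {n : ℕ} {X : Fin n → ℝ} {r s : ℝ}

lemma tileable_apply (i : Fin n) (hi : 0 < X i) : Tileable (X i) X :=
  ⟨⟨1, fun _ ↦ 0, fun _ ↦ 0, fun _ ↦ 1, fun _ ↦ X i, fun _ ↦ one_pos, fun _ ↦ hi,
    by simp only [iUnion_const, zero_add], fun k l hkl ↦ absurd (Subsingleton.elim k l) hkl⟩,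
    fun _ ↦ ⟨i, Or.inl (div_one _)⟩⟩

lemma Tileable.add (hr : 0 ≤ r) (hs : 0 ≤ s) : Tileable r X → Tileable s X → Tileable (r + s) X
  | ⟨T₁, h₁⟩, ⟨T₂, h₂⟩ => ⟨T₁.stack hr hs T₂, Fin.addCases
      (fun k ↦ by simpa [RectTiling.ratioOK, RectTiling.stack] using h₁ k)
      (fun k ↦ by simpa [RectTiling.ratioOK, RectTiling.stack] using h₂ k)⟩

lemma Tileable.inv (hr : 0 < r) : Tileable r X → Tileable r⁻¹ X
  | ⟨T, hT⟩ => ⟨T.transpose hr, fun k ↦ (hT k).imp fun _ ↦ by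
      simp only [RectTiling.ratioOK, RectTiling.transpose, div_div_div_cancel_right₀ hr.ne']
      exact Or.symm⟩

lemma Tileable.natCast_mul (hr : 0 < r) (h : Tileable r X) {k : ℕ} (hk : 0 < k) :
    Tileable (k * r) X := by
  induction k, hk using Nat.le_induction with
  | base => simpa using h
  | succ k hk ih =>
    simpa [add_mul] using ih.add (by positivity) hr.le h

lemma Tileable.ratCast_mul (hr : 0 < r) (h : Tileable r X) {q : ℚ} (hq : 0 < q) :
    Tileable (q * r) X := by
  obtain ⟨k, hk⟩ := Int.eq_ofNat_of_zero_le (Rat.num_pos.2 hq).le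
  have hk0 : 0 < k := by have := Rat.num_pos.2 hq; omega
  have hden : Tileable (q.den * r⁻¹)⁻¹ X :=
    ((h.inv hr).natCast_mul (inv_pos.2 hr) q.den_pos).inv (by positivity)
  convert hden.natCast_mul (by positivity) hk0 using 1
  rw [Rat.cast_def, hk]
  push_cast
  rw [mul_inv, inv_inv]
  ring

end Tileable

section QuadraticField

variable {p : ℚ}

lemma mul_conj_eq (hp : 0 ≤ p) (e f : ℚ) :
    ((e : ℝ) + f * √p) * (e - f * √p) = ((e ^ 2 - p * f ^ 2 : ℚ) : ℝ) := by
  push_cast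
  linear_combination (-(f : ℝ) ^ 2) * Real.sq_sqrt (Rat.cast_nonneg.2 hp)

lemma inv_add_mul_sqrt (hp : 0 ≤ p) {e f : ℚ} (hN : e ^ 2 - p * f ^ 2 ≠ 0) :
    ((e : ℝ) + f * √p)⁻¹ =
      ((e / (e ^ 2 - p * f ^ 2) : ℚ) : ℝ) + ((-f / (e ^ 2 - p * f ^ 2) : ℚ) : ℝ) * √p := by
  refine inv_eq_of_mul_eq_one_right ?_
  calc _ = ((e : ℝ) + f * √p) * (e - f * √p) / ((e ^ 2 - p * f ^ 2 : ℚ) : ℝ) := by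
        push_cast; ring
    _ = 1 := by rw [mul_conj_eq hp, div_self (Rat.cast_ne_zero.2 hN)]

def quadraticSubfield (p : ℚ) (hp : 0 ≤ p) : Subfield ℝ where
  carrier := {x | ∃ e f : ℚ, x = e + f * √p}
  zero_mem' := ⟨0, 0, by simp⟩
  one_mem' := ⟨1, 0, by simp⟩
  add_mem' := by
    rintro _ _ ⟨e, f, rfl⟩ ⟨e', f', rfl⟩
    exact ⟨e + e', f + f', by push_cast; ring⟩
  neg_mem' := by
    rintro _ ⟨e, f, rfl⟩
    exact ⟨-e, -f, by push_cast; ring⟩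
  mul_mem' := by
    rintro _ _ ⟨e, f, rfl⟩ ⟨e', f', rfl⟩
    refine ⟨e * e' + p * f * f', e * f' + f * e', ?_⟩
    push_cast
    linear_combination (f : ℝ) * f' * Real.sq_sqrt (Rat.cast_nonneg.2 hp)
  inv_mem' := by
    rintro _ ⟨e, f, rfl⟩
    by_cases hN : e ^ 2 - p * f ^ 2 = 0
    · -- `e + f √p` is then `0` or, if its conjugate vanishes, the rational `2 e`
      have h := mul_conj_eq hp e f
      rw [hN, Rat.cast_zero, mul_eq_zero] at h
      rcases h with h | h
      · exact ⟨0, 0, by simp [h]⟩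
      · exact ⟨(2 * e)⁻¹, 0, by rw [show (f : ℝ) * √p = e by linarith]; push_cast; ring⟩
    · exact ⟨_, _, inv_add_mul_sqrt hp hN⟩

end QuadraticField

section Constructions

variable {n : ℕ} {X : Fin n → ℝ} {p : ℚ}

lemma Tileable.add_ratCast_mul_inv {x : ℝ} (hx : 0 < x) (h : Tileable x X) {q : ℚ} (hq : 0 < q) :
    Tileable (x + q * x⁻¹) X :=
  h.add hx.le (by positivity) ((h.inv hx).ratCast_mul (inv_pos.2 hx) hq)

lemma Tileable.of_ratCast_mul {x : ℝ} {q : ℚ} (hq : 0 < q) (hx : 0 < q * x)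
    (h : Tileable (q * x) X) : Tileable x X := by
  simpa [← mul_assoc, hq.ne'] using h.ratCast_mul hx (inv_pos.2 hq)

lemma tileable_sqrt_of_conj_neg (hp : 0 ≤ p) {a b : ℚ} (hx : 0 < (a : ℝ) + b * √p)
    (hconj : (a : ℝ) - b * √p < 0) (h : Tileable ((a : ℝ) + b * √p) X) : Tileable √p X := by
  have hN := mul_conj_eq hp a b
  have hN0 : a ^ 2 - p * b ^ 2 < 0 := by
    exact_mod_cast hN ▸ mul_neg_of_pos_of_neg hx hconj
  -- adding `-(x x') x⁻¹ = -x'` to `x` leaves `x - x' = 2 b √p`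
  have hsum : (a : ℝ) + b * √p + ((-(a ^ 2 - p * b ^ 2) : ℚ) : ℝ) * ((a : ℝ) + b * √p)⁻¹ =
      ((2 * b : ℚ) : ℝ) * √p := by
    rw [Rat.cast_neg, ← hN]
    field_simp
    push_cast
    ring
  have hb : (0 : ℝ) < ((2 * b : ℚ) : ℝ) * √p := by push_cast; linarith
  refine Tileable.of_ratCast_mul ?_ hb (hsum ▸ h.add_ratCast_mul_inv hx (neg_pos.2 hN0))
  exact_mod_cast pos_of_mul_pos_left hb (Real.sqrt_nonneg _)

lemma tileable_one_of_conj_pos (hp : 0 ≤ p) {a b : ℚ} (hx : 0 < (a : ℝ) + b * √p)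
    (hconj : 0 < (a : ℝ) - b * √p) (h : Tileable ((a : ℝ) + b * √p) X) : Tileable 1 X := by
  have hN := mul_conj_eq hp a b
  have hN0 : 0 < a ^ 2 - p * b ^ 2 := by exact_mod_cast hN ▸ mul_pos hx hconj
  -- adding `(x x') x⁻¹ = x'` to `x` gives `x + x' = 2 a`
  have hsum : (a : ℝ) + b * √p + ((a ^ 2 - p * b ^ 2 : ℚ) : ℝ) * ((a : ℝ) + b * √p)⁻¹ =
      ((2 * a : ℚ) : ℝ) * 1 := by
    rw [← hN]
    field_simp
    push_cast
    ring
  have ha : (0 : ℝ) < ((2 * a : ℚ) : ℝ) * 1 := by push_cast; linarith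
  refine Tileable.of_ratCast_mul ?_ ha (hsum ▸ h.add_ratCast_mul_inv hx hN0)
  exact_mod_cast pos_of_mul_pos_left ha zero_le_one

lemma tileable_of_nonneg (hp : 0 < p) (h₁ : Tileable 1 X) (hs : Tileable √p X) {e f : ℚ}
    (he : 0 ≤ e) (hf : 0 ≤ f) (hpos : 0 < (e : ℝ) + f * √p) :
    Tileable ((e : ℝ) + f * √p) X := by
  have hsp : 0 < √p := Real.sqrt_pos.2 (by exact_mod_cast hp)
  rcases he.eq_or_lt with rfl | he
  · have hf : 0 < f := by
      have : (0 : ℝ) < f * √p := by simpa using hpos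
      exact_mod_cast pos_of_mul_pos_left this hsp.le
    simpa using hs.ratCast_mul hsp hf
  rcases hf.eq_or_lt with rfl | hf
  · simpa using h₁.ratCast_mul one_pos he
  · simpa using (h₁.ratCast_mul one_pos he).add (by positivity) (by positivity)
      (hs.ratCast_mul hsp hf)

lemma tileable_of_pos (hp : 0 < p) (h₁ : Tileable 1 X) (hs : Tileable √p X) {e f : ℚ}
    (hpos : 0 < (e : ℝ) + f * √p) : Tileable ((e : ℝ) + f * √p) X := by
  by_cases hef : 0 ≤ e ∧ 0 ≤ f
  · exact tileable_of_nonneg hp h₁ hs hef.1 hef.2 hpos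
  have hsp : 0 < √p := Real.sqrt_pos.2 (by exact_mod_cast hp)
  have hN := mul_conj_eq hp.le e f
  -- `e` and `f` have opposite signs, so the norm `N` has the sign of `e` and of `-f`
  obtain ⟨he, hf, hN0⟩ : 0 ≤ e / (e ^ 2 - p * f ^ 2) ∧ 0 ≤ -f / (e ^ 2 - p * f ^ 2) ∧
      e ^ 2 - p * f ^ 2 ≠ 0 := by
    rcases not_and_or.1 hef with he | hf
    · have he : (e : ℝ) < 0 := by exact_mod_cast not_le.1 he
      have hf : (0 : ℝ) < f := pos_of_mul_pos_left (by linarith) hsp.le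
      have hN0 : e ^ 2 - p * f ^ 2 < 0 := by
        exact_mod_cast hN ▸ mul_neg_of_pos_of_neg hpos (by nlinarith)
      exact ⟨(div_pos_of_neg_of_neg (by exact_mod_cast he) hN0).le,
        (div_pos_of_neg_of_neg (by exact_mod_cast neg_lt_zero.2 hf) hN0).le, hN0.ne⟩
    · have hf : (f : ℝ) < 0 := by exact_mod_cast not_le.1 hf
      have hN0 : 0 < e ^ 2 - p * f ^ 2 := by
        exact_mod_cast hN ▸ mul_pos hpos (by nlinarith)
      have he : (0 : ℝ) < e := by nlinarith
      exact ⟨(div_pos (by exact_mod_cast he) hN0).le,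
        (div_pos (by exact_mod_cast neg_pos.2 hf) hN0).le, hN0.ne'⟩
  have hinv := inv_add_mul_sqrt hp.le hN0
  have h := (tileable_of_nonneg hp h₁ hs he hf (hinv ▸ inv_pos.2 hpos)).inv
    (hinv ▸ inv_pos.2 hpos)
  rwa [← hinv, inv_inv] at h

end Constructions

lemma Finset.exists_strictMono_enum {G : Finset ℝ} {a b : ℝ} (ha : a ∈ G) (hb : b ∈ G)
    (hG : ∀ x ∈ G, x ∈ Set.Icc a b) :
    ∃ (e : ℕ → ℝ) (M : ℕ), StrictMono e ∧ e 0 = a ∧ e M = b ∧ ∀ x ∈ G, ∃ i ≤ M, e i = x := by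
  obtain ⟨M, hM⟩ : ∃ M, G.card = M + 1 := Nat.exists_eq_succ_of_ne_zero (card_ne_zero_of_mem ha)
  set σ := G.orderEmbOfFin hM
  have hσ : ∀ x ∈ G, ∃ j, σ j = x := fun x hx ↦ by
    rwa [← Set.mem_range, range_orderEmbOfFin]
  have hσG : ∀ j, σ j ∈ G := fun j ↦ orderEmbOfFin_mem G hM j
  set e : ℕ → ℝ := fun i ↦ if h : i ≤ M then σ ⟨i, Nat.lt_succ_of_le h⟩ else b + (i - M)
  have he : ∀ j : Fin (M + 1), e j = σ j := fun j ↦ dif_pos (Nat.le_of_lt_succ j.2)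
  refine ⟨e, M, strictMono_nat_of_lt_succ fun i ↦ ?_, ?_, ?_, fun x hx ↦ ?_⟩
  · by_cases hi : i + 1 ≤ M
    · rw [he ⟨i, by omega⟩, he ⟨i + 1, by omega⟩]
      exact σ.strictMono (Fin.mk_lt_mk.2 (Nat.lt_succ_self i))
    · have hle : e i ≤ b + (i - M) := by
        by_cases hiM : i ≤ M
        · obtain rfl : i = M := by omega
          rw [sub_self, add_zero]
          exact (he (Fin.last i)).trans_le (hG _ (hσG _)).2
        · exact (dif_neg hiM).le
      simp only [e, dif_neg hi]
      push_cast
      linarith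
  · obtain ⟨j, rfl⟩ := hσ a ha
    exact le_antisymm (he 0 ▸ σ.monotone (Fin.zero_le j)) (hG _ (he 0 ▸ hσG 0)).1
  · obtain ⟨j, rfl⟩ := hσ b hb
    exact le_antisymm (hG _ (he (Fin.last M) ▸ hσG _)).2
      (he (Fin.last M) ▸ σ.monotone (Fin.le_last j))
  · obtain ⟨j, rfl⟩ := hσ x hx
    exact ⟨j, Nat.le_of_lt_succ j.2, he j⟩

lemma Finset.sum_sum_eq_of_existsUnique {ι α M : Type*} [Fintype ι] [AddCommMonoid M]
    {S : Finset α} {P : ι → Finset α} (hPS : ∀ k, P k ⊆ S) (hP : ∀ x ∈ S, ∃! k, x ∈ P k)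
    (F : α → M) : ∑ k, ∑ x ∈ P k, F x = ∑ x ∈ S, F x := by
  classical
  rw [← sum_biUnion fun k _ l _ hkl ↦ disjoint_left.2 fun x hk hl ↦
    hkl ((hP x (hPS k hk)).unique hk hl)]
  congr 1
  ext x
  simp only [mem_biUnion, mem_univ, true_and]
  exact ⟨fun ⟨k, hk⟩ ↦ hPS k hk, fun hx ↦ (hP x hx).exists⟩

/-- A subdivision `0 = e 0 < e 1 < ⋯ < e M = L` of `[0, L]` in which each interval
`[c k, c k + d k]` is the union of the cells `[e i, e (i + 1)]`, `s k ≤ i < t k`. -/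
structure Subdivision {ι : Type*} (L : ℝ) (c d : ι → ℝ) where
  e : ℕ → ℝ
  M : ℕ
  s : ι → ℕ
  t : ι → ℕ
  strictMono : StrictMono e
  e_zero : e 0 = 0
  e_M : e M = L
  s_le_t : ∀ k, s k ≤ t k
  t_le_M : ∀ k, t k ≤ M
  e_s : ∀ k, e (s k) = c k
  e_t : ∀ k, e (t k) = c k + d k

namespace Subdivision

variable {ι : Type*} {L : ℝ} {c d : ι → ℝ}

lemma nonempty [Fintype ι] (hL : 0 ≤ L) (hc : ∀ k, 0 ≤ c k) (hd : ∀ k, 0 ≤ d k)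
    (hcd : ∀ k, c k + d k ≤ L) : Nonempty (Subdivision L c d) := by
  classical
  set G : Finset ℝ := insert 0 (insert L (Finset.univ.image c ∪ Finset.univ.image (c + d)))
  have hc' : ∀ k, c k ∈ G := fun k ↦ by simp [G]
  have hcd' : ∀ k, c k + d k ∈ G := fun k ↦ by simp [G]
  obtain ⟨e, M, he, he0, heM, heG⟩ := Finset.exists_strictMono_enum (G := G) (a := 0) (b := L)
    (by simp [G]) (by simp [G]) fun x hx ↦ by
      simp only [G, Finset.mem_insert, Finset.mem_union, Finset.mem_image, Finset.mem_univ,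
        true_and, Pi.add_apply] at hx
      rcases hx with rfl | rfl | ⟨k, rfl⟩ | ⟨k, rfl⟩
      · exact ⟨le_rfl, hL⟩
      · exact ⟨hL, le_rfl⟩
      · exact ⟨hc k, by linarith [hd k, hcd k]⟩
      · exact ⟨by linarith [hc k, hd k], hcd k⟩
  choose s hsM hs using fun k ↦ heG _ (hc' k)
  choose t htM ht using fun k ↦ heG _ (hcd' k)
  exact ⟨⟨e, M, s, t, he, he0, heM,
    fun k ↦ he.le_iff_le.1 (by rw [hs, ht]; linarith [hd k]), htM, hs, ht⟩⟩

variable (S : Subdivision L c d)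

lemma map_eq_sum (f : ℝ →+ ℝ) : f L = ∑ i ∈ Finset.range S.M, f (S.e (i + 1) - S.e i) := by
  rw [← map_sum, Finset.range_eq_Ico, Finset.sum_Ico_sub _ (Nat.zero_le _), S.e_M, S.e_zero,
    sub_zero]

lemma map_d_eq_sum (f : ℝ →+ ℝ) (k : ι) :
    f (d k) = ∑ i ∈ Finset.Ico (S.s k) (S.t k), f (S.e (i + 1) - S.e i) := by
  rw [← map_sum, Finset.sum_Ico_sub _ (S.s_le_t k), S.e_s, S.e_t, add_sub_cancel_left]

noncomputable def mid (i : ℕ) : ℝ := (S.e i + S.e (i + 1)) / 2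

lemma e_lt_mid (i : ℕ) : S.e i < S.mid i := by
  have := S.strictMono (Nat.lt_succ_self i); rw [mid]; linarith

lemma mid_lt_e (i : ℕ) : S.mid i < S.e (i + 1) := by
  have := S.strictMono (Nat.lt_succ_self i); rw [mid]; linarith

lemma mid_mem_Icc {i : ℕ} (hi : i < S.M) : S.mid i ∈ Icc 0 L := by
  have h₀ := S.strictMono.monotone (Nat.zero_le i)
  have h₁ := S.strictMono.monotone (show i + 1 ≤ S.M from hi)
  exact ⟨by linarith [S.e_zero, S.e_lt_mid i], by linarith [S.e_M, S.mid_lt_e i]⟩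

lemma mem_Ico_of_mid_mem {i : ℕ} {k : ι} (h : S.mid i ∈ Icc (c k) (c k + d k)) :
    i ∈ Finset.Ico (S.s k) (S.t k) := by
  rw [← S.e_t, ← S.e_s] at h
  rw [Finset.mem_Ico]
  constructor
  · by_contra! hi
    exact (S.mid_lt_e i).not_ge (h.1.trans' (S.strictMono.monotone hi))
  · by_contra! hi
    exact (S.e_lt_mid i).not_ge (h.2.trans (S.strictMono.monotone hi))

lemma mid_mem_Ioo {i : ℕ} {k : ι} (h : i ∈ Finset.Ico (S.s k) (S.t k)) :
    S.mid i ∈ Ioo (c k) (c k + d k) := by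
  rw [← S.e_t, ← S.e_s]
  rw [Finset.mem_Ico] at h
  exact ⟨(S.strictMono.monotone h.1).trans_lt (S.e_lt_mid i),
    (S.mid_lt_e i).trans_le (S.strictMono.monotone h.2)⟩

end Subdivision

namespace RectTiling

variable {r : ℝ} (T : RectTiling r)

lemma existsUnique_cell (Sx : Subdivision 1 T.px T.w) (Sy : Subdivision r T.py T.h) :
    ∀ ij ∈ Finset.range Sx.M ×ˢ Finset.range Sy.M,
      ∃! k, ij ∈ Finset.Ico (Sx.s k) (Sx.t k) ×ˢ Finset.Ico (Sy.s k) (Sy.t k) := by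
  rintro ⟨i, j⟩ hij
  simp only [Finset.mem_product, Finset.mem_range] at hij ⊢
  -- the centre of the cell lies in a tile, and in the interior of each tile containing the cell
  have hcov : (Sx.mid i, Sy.mid j) ∈ Icc 0 1 ×ˢ Icc 0 r :=
    ⟨Sx.mid_mem_Icc hij.1, Sy.mid_mem_Icc hij.2⟩
  rw [T.cover, mem_iUnion] at hcov
  obtain ⟨k, hk⟩ := hcov
  have hkcell := And.intro (Sx.mem_Ico_of_mid_mem hk.1) (Sy.mem_Ico_of_mid_mem hk.2)
  refine ⟨k, hkcell, fun l hl ↦ ?_⟩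
  by_contra hlk
  exact disjoint_left.1 (T.disj l k hlk)
    (mk_mem_prod (Sx.mid_mem_Ioo hl.1) (Sy.mid_mem_Ioo hl.2))
    (mk_mem_prod (Sx.mid_mem_Ioo hkcell.1) (Sy.mid_mem_Ioo hkcell.2))

theorem sum_map_mul_map (hr : 0 ≤ r) (f : ℝ →+ ℝ) :
    ∑ k, f (T.w k) * f (T.h k) = f 1 * f r := by
  obtain ⟨Sx⟩ := Subdivision.nonempty zero_le_one (fun k ↦ (T.bounds k).1)
    (fun k ↦ (T.w_pos k).le) (fun k ↦ (T.bounds k).2.1)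
  obtain ⟨Sy⟩ := Subdivision.nonempty hr (fun k ↦ (T.bounds k).2.2.1)
    (fun k ↦ (T.h_pos k).le) (fun k ↦ (T.bounds k).2.2.2)
  have hsub : ∀ k, Finset.Ico (Sx.s k) (Sx.t k) ×ˢ Finset.Ico (Sy.s k) (Sy.t k) ⊆
      Finset.range Sx.M ×ˢ Finset.range Sy.M := fun k ↦ by
    simp only [Finset.range_eq_Ico]
    exact Finset.product_subset_product (Finset.Ico_subset_Ico (Nat.zero_le _) (Sx.t_le_M k))
      (Finset.Ico_subset_Ico (Nat.zero_le _) (Sy.t_le_M k))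
  simp_rw [Sx.map_d_eq_sum, Sy.map_d_eq_sum, Sx.map_eq_sum, Sy.map_eq_sum, Finset.sum_mul_sum,
    ← Finset.sum_product']
  exact Finset.sum_sum_eq_of_existsUnique hsub (T.existsUnique_cell Sx Sy) _

end RectTiling

lemma Subfield.exists_dual_one_eq_neg_one {L : Type*} [Field L] (K : Subfield L) {z : L}
    (hz : z ∉ K) : ∃ φ : Module.Dual K L, φ 1 = 1 ∧ φ z = -1 := by
  have hli : LinearIndependent K ![1, -z] := LinearIndependent.pair_iff.2 fun s t hst ↦ by
    have ht : t = 0 := by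
      by_contra ht
      have : z = ((s / t : K) : L) := by
        rw [Subfield.smul_def, Subfield.smul_def] at hst
        have : (t : L) ≠ 0 := by exact_mod_cast ht
        push_cast
        field_simp
        linear_combination -hst
      exact hz (this ▸ (s / t).2)
    subst ht
    simpa using hst
  obtain ⟨φ, hφ⟩ := Module.exists_dual_forall_apply_eq_one (linearIndepOn_univ_iff.2 hli)
  exact ⟨φ, by simpa using hφ 0 trivial, by simpa [neg_eq_iff_eq_neg] using hφ 1 trivial⟩

lemma Subfield.dual_mul_dual_nonneg {K : Subfield ℝ} (φ : Module.Dual K ℝ) {w h x : ℝ}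
    (hx : x ∈ K) (hx0 : 0 ≤ x) (hw : w ≠ 0) (hh : h ≠ 0) (hwh : h / w = x ∨ w / h = x) :
    0 ≤ (φ w : ℝ) * φ h := by
  have key : ∀ {u v : ℝ}, u ≠ 0 → v / u = x → 0 ≤ (φ u : ℝ) * φ v := fun {u v} hu huv ↦ by
    have hv : v = (⟨x, hx⟩ : K) • u := by
      rw [Subfield.smul_def]
      exact (div_mul_cancel₀ v hu).symm.trans (congrArg (· * u) huv)
    rw [hv, map_smul, smul_eq_mul, Subfield.coe_mul]
    nlinarith [sq_nonneg (φ u : ℝ)]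
  rcases hwh with hwh | hwh
  · exact key hw hwh
  · exact mul_comm (φ w : ℝ) _ ▸ key hh hwh

theorem Subfield.mem_of_tileable (K : Subfield ℝ) {z : ℝ} (hz : 0 < z) {n : ℕ}
    {X : Fin n → ℝ} (hXK : ∀ i, X i ∈ K) (hXpos : ∀ i, 0 < X i) (h : Tileable z X) : z ∈ K := by
  by_contra hzK
  obtain ⟨φ, hφ1, hφz⟩ := K.exists_dual_one_eq_neg_one hzK
  obtain ⟨T, hT⟩ := h
  have hsum := T.sum_map_mul_map hz.le (K.subtype.toAddMonoidHom.comp φ.toAddMonoidHom)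
  have hnonneg : 0 ≤ ∑ k, (φ (T.w k) : ℝ) * φ (T.h k) := Finset.sum_nonneg fun k _ ↦ by
    obtain ⟨i, hi⟩ := hT k
    exact K.dual_mul_dual_nonneg φ (hXK i) (hXpos i).le (T.w_pos k).ne' (T.h_pos k).ne' hi
  simp [hφ1, hφz] at hsum
  linarith

theorem sharov_mixed_case_general (p : ℚ) (hp : 0 < p)
    (n : ℕ) (a b : Fin n → ℚ) (X : Fin n → ℝ)
    (hX : ∀ i, X i = (a i : ℝ) + (b i : ℝ) * Real.sqrt p)
    (hXpos : ∀ i, 0 < X i)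
    (hmix : ∃ i j, ((a i : ℝ) - (b i : ℝ) * Real.sqrt p) *
        ((a j : ℝ) - (b j : ℝ) * Real.sqrt p) < 0)
    (z : ℝ) (hz : 0 < z) :
    Tileable z X ↔ ∃ e f : ℚ, z = (e : ℝ) + (f : ℝ) * Real.sqrt p := by
  refine ⟨fun h ↦ (quadraticSubfield p hp.le).mem_of_tileable hz (fun i ↦ ⟨a i, b i, hX i⟩)
    hXpos h, ?_⟩
  rintro ⟨e, f, rfl⟩
  have hXt : ∀ i, Tileable ((a i : ℝ) + b i * √p) X := fun i ↦ hX i ▸ tileable_apply i (hXpos i)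
  have key : ∀ i j, (a i : ℝ) - b i * √p < 0 → 0 < (a j : ℝ) - b j * √p →
      Tileable ((e : ℝ) + f * √p) X := fun i j hi hj ↦
    tileable_of_pos hp (tileable_one_of_conj_pos hp.le (hX j ▸ hXpos j) hj (hXt j))
      (tileable_sqrt_of_conj_neg hp.le (hX i ▸ hXpos i) hi (hXt i)) hz
  obtain ⟨i, j, hij⟩ := hmix
  rcases mul_neg_iff.1 hij with ⟨hi, hj⟩ | ⟨hi, hj⟩
  exacts [key j i hj hi, key i j hi hj]

theorem sharov_mixed_case (p : ℚ) (hp : 0 < p) (hirr : Irrational (Real.sqrt p))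
    (n : ℕ) (a b : Fin n → ℚ) (X : Fin n → ℝ)
    (hX : ∀ i, X i = (a i : ℝ) + (b i : ℝ) * Real.sqrt p)
    (hXpos : ∀ i, 0 < X i)
    (hmix : ∃ i j, ((a i : ℝ) - (b i : ℝ) * Real.sqrt p) *
        ((a j : ℝ) - (b j : ℝ) * Real.sqrt p) < 0)
    (z : ℝ) (hz : 0 < z) :
    Tileable z X ↔ ∃ e f : ℚ, z = (e : ℝ) + (f : ℝ) * Real.sqrt p :=
  sharov_mixed_case_general p hp n a b X hX hXpos hmix z hz
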